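/- arXiv:1605.02717 — 3 statements merged into one kernel-verified Lean document; each statement's English description precedes it below -/
import Mathlib

section
/- Let V be a finite-dimensional vector space over ℚ, N ≥ 1 an integer, and p a prime not dividing N. If Λ ⊆ V is a ℤ[1/(pN)]-lattice (a finitely generated ℤ[1/(pN)]-submodule spanning V) and L ⊆ V ⊗ ℚ_p is a ℤ_p-lattice, then L ∩ Λ is a ℤ[1/N]-lattice in V, i.e. a free finitely generated ℤ[1/N]-module spanning V over ℚ. -/
open scoped TensorProduct

set_option synthInstance.maxHeartbeats 1000000
noncomputable section

/-- `ℤ[1/m]`, realised as the subring of `ℚ` generated by `1/m`. -/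
def zInv (m : ℕ) : Subring ℚ := Subring.closure {((m : ℚ))⁻¹}

/-- A ℚ-vector space is a module over `ℤ[1/m] ⊆ ℚ` by restriction of scalars. -/
instance zInvModule (m : ℕ) (V : Type*) [AddCommGroup V] [Module ℚ V] :
    Module (zInv m) V :=
  Module.compHom V (zInv m).subtype

/-- `ℚ_p ⊗ V` is a module over `ℤ_p` by restriction of scalars. -/
instance padicIntModule (p : ℕ) [Fact p.Prime] (W : Type*) [AddCommGroup W]
    [Module ℚ_[p] W] : Module ℤ_[p] W :=
  Module.compHom W (PadicInt.Coe.ringHom : ℤ_[p] →+* ℚ_[p])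

/-!
Fix a ℚ-basis `e` of `V`. Because `Λ` is finitely generated, some nonzero integer `z` carries
the `e`-coordinates of every vector of `Λ` into `ℤ[1/pN]`; because `L` is finitely generated,
some `p^v` carries them (in `ℚ_p`) into `ℤ_p`. As `p ∤ N`, `ℤ[1/N] = ℤ[1/pN] ∩ ℤ_p`, so `Λ ∩ L`
lies in the `ℤ[1/N]`-span of the basis `(z p^v)⁻¹ e`. The ring `ℤ[1/N]` is a localisation of
`ℤ`, hence a PID, so `Λ ∩ L` is finitely generated and free. It spans `V` since every `v` has a
multiple `n p^k v` lying in both `Λ` and `L`.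
-/

theorem IsLocalization.isPrincipalIdealRing {R : Type*} [CommRing R] [IsPrincipalIdealRing R]
    (M : Submonoid R) (S : Type*) [CommRing S] [Algebra R S] [IsLocalization M S] :
    IsPrincipalIdealRing S where
  principal I := by
    obtain ⟨d, hd⟩ := (IsPrincipalIdealRing.principal (I.under R)).principal
    refine ⟨⟨algebraMap R S d, ?_⟩⟩
    rw [← IsLocalization.map_under M S I, hd, Ideal.submodule_span_eq, Ideal.map_span,
      Set.image_singleton, Ideal.submodule_span_eq]

section FractionRing

open Submodule

variable {R K V : Type*} [CommRing R] [Field K] [Algebra R K] [IsFractionRing R K]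
  [AddCommGroup V] [Module K V] [Module R V] [IsScalarTower R K V]

theorem Submodule.exists_smul_mem_of_span_eq_top {S : Submodule R V}
    (hS : span K (S : Set V) = ⊤) (v : V) : ∃ r ∈ nonZeroDivisors R, r • v ∈ S := by
  -- `span K S` is the localisation of `S` at the nonzero divisors of `R`.
  have := isLocalizedModule_id (nonZeroDivisors R) V K
  have hv : v ∈ S.localized' K (nonZeroDivisors R) LinearMap.id := by
    simp [localized'_eq_span, hS]
  obtain ⟨m, hm, s, rfl⟩ := hv
  exact ⟨s, s.2, by rwa [← Submonoid.smul_def, IsLocalizedModule.mk'_cancel']⟩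

theorem Submodule.FG.exists_smul_mem_span_basis [IsDomain R] {ι : Type*} [Finite ι]
    (b : Module.Basis ι K V) {S : Submodule R V} (hS : S.FG) :
    ∃ r ∈ nonZeroDivisors R, ∀ x ∈ S, r • x ∈ span R (Set.range b) := by
  obtain ⟨s, rfl⟩ := hS
  obtain ⟨r, hr⟩ := IsLocalization.exist_integer_multiples_of_finite (nonZeroDivisors R)
    fun gi : s × ι => b.repr gi.1 gi.2
  refine ⟨r, r.2, fun x hx => ?_⟩
  suffices span R s ≤ (span R (Set.range b)).comap ((r : R) • LinearMap.id) from this hx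
  refine span_le.mpr fun g hg => (b.mem_span_iff_repr_mem R _).mpr fun i => ?_
  rw [LinearMap.smul_apply, LinearMap.id_apply, ← algebraMap_smul K (r : R) g, map_smul,
    Finsupp.smul_apply, algebraMap_smul]
  exact hr (⟨g, hg⟩, i)

end FractionRing

lemma Submodule.pow_valuation_smul_mem {p : ℕ} [Fact p.Prime] {W : Type*} [AddCommGroup W]
    [Module ℤ_[p] W] {S : Submodule ℤ_[p] W} {s : ℤ_[p]} (hs : s ≠ 0) {w : W}
    (h : s • w ∈ S) :
    (p : ℤ_[p]) ^ s.valuation • w ∈ S := by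
  rwa [PadicInt.unitCoeff_spec hs, mul_smul, S.smul_mem_iff_of_isUnit (Units.isUnit _)] at h

lemma inv_mem_zInv (m : ℕ) : ((m : ℚ))⁻¹ ∈ zInv m :=
  Subring.subset_closure (Set.mem_singleton _)

lemma mem_zInv_iff {m : ℕ} (hm : m ≠ 0) {q : ℚ} :
    q ∈ zInv m ↔ ∃ (k : ℕ) (z : ℤ), q = z / (m : ℚ) ^ k := by
  constructor
  · intro hq
    induction hq using Subring.closure_induction with
    | mem x hx => exact ⟨1, 1, by simp [Set.mem_singleton_iff.mp hx]⟩
    | zero => exact ⟨0, 0, by simp⟩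
    | one => exact ⟨0, 1, by simp⟩
    | add x y _ _ hx hy =>
      obtain ⟨k, a, rfl⟩ := hx
      obtain ⟨l, b, rfl⟩ := hy
      exact ⟨k + l, a * m ^ l + b * m ^ k, by push_cast; field_simp; ring⟩
    | neg x _ hx =>
      obtain ⟨k, a, rfl⟩ := hx
      exact ⟨k, -a, by push_cast; ring⟩
    | mul x y _ _ hx hy =>
      obtain ⟨k, a, rfl⟩ := hx
      obtain ⟨l, b, rfl⟩ := hy
      exact ⟨k + l, a * b, by push_cast; field_simp; ring⟩
  · rintro ⟨k, z, rfl⟩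
    rw [div_eq_mul_inv, ← inv_pow]
    exact mul_mem (intCast_mem _ z) (pow_mem (inv_mem_zInv m) k)

lemma zInv_le_zInv_mul {m : ℕ} (hm : m ≠ 0) (n : ℕ) : zInv n ≤ zInv (m * n) := by
  rw [zInv, Subring.closure_le, Set.singleton_subset_iff]
  have : ((n : ℚ))⁻¹ = m * ((m * n : ℕ) : ℚ)⁻¹ := by push_cast; field_simp
  rw [SetLike.mem_coe, this]
  exact mul_mem (natCast_mem _ m) (inv_mem_zInv _)

lemma zInv.isLocalization {m : ℕ} (hm : m ≠ 0) : IsLocalization.Away (m : ℤ) (zInv m) where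
  map_units := by
    rintro ⟨_, k, rfl⟩
    have : IsUnit (m : zInv m) :=
      isUnit_iff_exists_inv.mpr ⟨⟨_, inv_mem_zInv m⟩, Subtype.ext (by simp [hm])⟩
    simpa using this.pow k
  surj x := by
    obtain ⟨k, z, hx⟩ := (mem_zInv_iff hm).mp x.2
    refine ⟨(z, ⟨(m : ℤ) ^ k, k, rfl⟩), Subtype.ext ?_⟩
    simp [hx, hm]
  exists_of_eq h := ⟨1, by simpa using h⟩

lemma zInv.isPrincipalIdealRing {m : ℕ} (hm : m ≠ 0) : IsPrincipalIdealRing (zInv m) :=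
  have := zInv.isLocalization hm
  IsLocalization.isPrincipalIdealRing (Submonoid.powers (m : ℤ)) (zInv m)

instance (m : ℕ) : IsFractionRing (zInv m) ℚ :=
  IsFractionRing.of_field _ _ fun q =>
    ⟨(q.num : zInv m), (q.den : zInv m), by simp [Rat.num_div_den]⟩

instance (m : ℕ) (V : Type*) [AddCommGroup V] [Module ℚ V] :
    IsScalarTower (zInv m) ℚ V :=
  ⟨fun c q x => mul_smul (c : ℚ) q x⟩

instance (p : ℕ) [Fact p.Prime] (W : Type*) [AddCommGroup W]
    [Module ℚ_[p] W] : IsScalarTower ℤ_[p] ℚ_[p] W :=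
  ⟨fun c q x => mul_smul (c : ℚ_[p]) q x⟩

instance (m : ℕ) : Module.IsTorsionFree (zInv m) ℚ :=
  Module.isTorsionFree_iff_algebraMap_injective.mpr Subtype.val_injective

lemma mem_zInv_iff_mem_zInv_mul_and_norm_le_one {p : ℕ} [Fact p.Prime] {N : ℕ} (hN : N ≠ 0)
    (hp : ¬ p ∣ N) {q : ℚ} :
    q ∈ zInv N ↔ q ∈ zInv (p * N) ∧ ‖(q : ℚ_[p])‖ ≤ 1 := by
  have hp0 : p ≠ 0 := (Fact.out : p.Prime).ne_zero
  have hnormN : ‖((N : ℚ) : ℚ_[p])‖ = 1 := by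
    rw [Rat.cast_natCast, Padic.norm_natCast_eq_one_iff]
    exact ((Fact.out : p.Prime).coprime_iff_not_dvd).mpr hp
  constructor
  · intro hq
    refine ⟨zInv_le_zInv_mul hp0 N hq, ?_⟩
    obtain ⟨k, z, rfl⟩ := (mem_zInv_iff hN).mp hq
    rw [Rat.cast_div, Rat.cast_pow, norm_div, norm_pow, hnormN, one_pow, div_one, Rat.cast_intCast]
    exact Padic.norm_int_le_one z
  · rintro ⟨hq, hnorm⟩
    obtain ⟨k, z, rfl⟩ := (mem_zInv_iff (mul_ne_zero hp0 hN)).mp hq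
    have hz : ‖(z : ℚ_[p])‖ ≤ (p : ℝ) ^ (-(k : ℤ)) := by
      have hnormpN : ‖(((p * N : ℕ) : ℚ) : ℚ_[p])‖ = (p : ℝ)⁻¹ := by
        rw [Nat.cast_mul, Rat.cast_mul, norm_mul, hnormN, mul_one, Rat.cast_natCast, Padic.norm_p]
      rw [Rat.cast_div, Rat.cast_pow, Rat.cast_intCast, norm_div, norm_pow, hnormpN,
        div_le_iff₀ (by positivity)] at hnorm
      rwa [zpow_neg, zpow_natCast, ← inv_pow, ← one_mul (_ ^ k)]
    obtain ⟨w, rfl⟩ := (Padic.norm_int_le_pow_iff_dvd z k).mp hz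
    exact (mem_zInv_iff hN).mpr ⟨k, w, by push_cast; field_simp; ring⟩

section Coordinates

variable {V : Type*} [AddCommGroup V] [Module ℚ V] {ι : Type*} [Finite ι]

lemma Submodule.FG.exists_int_mul_repr_mem_zInv {m : ℕ} (hm : m ≠ 0)
    {Λ : Submodule (zInv m) V} (hΛ : Λ.FG) (e : Module.Basis ι ℚ V) :
    ∃ z : ℤ, z ≠ 0 ∧ ∀ x ∈ Λ, ∀ i, z * e.repr x i ∈ zInv m := by
  obtain ⟨a, ha, hΛa⟩ := hΛ.exists_smul_mem_span_basis e
  obtain ⟨k, z, hz⟩ := (mem_zInv_iff hm).mp a.2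
  refine ⟨z, fun hz0 => nonZeroDivisors.ne_zero ha (Subtype.ext (by simp [hz, hz0])),
    fun x hx i => ?_⟩
  obtain ⟨b, hb⟩ := (e.mem_span_iff_repr_mem (zInv m) _).mp (hΛa x hx) i
  have hb' : (b : ℚ) = a * e.repr x i := by
    rw [← smul_eq_mul, ← Finsupp.smul_apply, ← map_smul]
    exact hb
  have hzx : (z : ℚ) * e.repr x i = m ^ k * b := by
    rw [hb', hz]
    field_simp
  rw [hzx]
  exact mul_mem (pow_mem (natCast_mem _ m) k) b.2

lemma Submodule.FG.exists_norm_pow_mul_repr_le_one {p : ℕ} [Fact p.Prime] {W : Type*}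
    [AddCommGroup W] [Module ℚ_[p] W] {L : Submodule ℤ_[p] W} (hL : L.FG)
    (B : Module.Basis ι ℚ_[p] W) :
    ∃ v : ℕ, ∀ y ∈ L, ∀ i, ‖(p : ℚ_[p]) ^ v * B.repr y i‖ ≤ 1 := by
  obtain ⟨s, hs, hLs⟩ := hL.exists_smul_mem_span_basis B
  refine ⟨s.valuation, fun y hy i => ?_⟩
  obtain ⟨b, hb⟩ := (B.mem_span_iff_repr_mem ℤ_[p] _).mp
    (Submodule.pow_valuation_smul_mem (nonZeroDivisors.ne_zero hs) (hLs y hy)) i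
  have hrepr : B.repr ((p : ℤ_[p]) ^ s.valuation • y) i =
      (p : ℚ_[p]) ^ s.valuation * B.repr y i := by
    rw [← algebraMap_smul ℚ_[p], map_smul]
    simp
  rw [← hrepr, ← hb]
  exact b.2

end Coordinates

section Intersection

open Submodule

variable {V : Type*} [AddCommGroup V] [Module ℚ V] {N p : ℕ} [Fact p.Prime]

def latticeInter (hN : N ≠ 0) (hp : ¬ p ∣ N) (Λ : Submodule (zInv (p * N)) V)
    (L : Submodule ℤ_[p] (ℚ_[p] ⊗[ℚ] V)) : Submodule (zInv N) V where
  carrier := (Λ : Set V) ∩ TensorProduct.mk ℚ ℚ_[p] V 1 ⁻¹' L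
  add_mem' hx hy :=
    ⟨Λ.add_mem hx.1 hy.1, by rw [Set.mem_preimage, map_add]; exact L.add_mem hx.2 hy.2⟩
  zero_mem' := ⟨Λ.zero_mem, by simp⟩
  smul_mem' c x hx := by
    have hc := (mem_zInv_iff_mem_zInv_mul_and_norm_le_one hN hp).mp c.2
    refine ⟨Λ.smul_mem ⟨c, hc.1⟩ hx.1, ?_⟩
    change TensorProduct.mk ℚ ℚ_[p] V 1 ((c : ℚ) • x) ∈ L
    rw [map_smul, ← algebraMap_smul ℚ_[p] (c : ℚ), eq_ratCast]
    exact L.smul_mem ⟨_, hc.2⟩ hx.2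

variable {hN : N ≠ 0} {hp : ¬ p ∣ N} {Λ : Submodule (zInv (p * N)) V}
  {L : Submodule ℤ_[p] (ℚ_[p] ⊗[ℚ] V)}

theorem latticeInter_fg [FiniteDimensional ℚ V] (hΛ : Λ.FG) (hL : L.FG) :
    (latticeInter hN hp Λ L).FG := by
  have := zInv.isPrincipalIdealRing hN
  let e := Module.finBasis ℚ V
  obtain ⟨z, hz0, hz⟩ :=
    hΛ.exists_int_mul_repr_mem_zInv (mul_ne_zero (Fact.out : p.Prime).ne_zero hN) e
  obtain ⟨v, hv⟩ := hL.exists_norm_pow_mul_repr_le_one (e.baseChange ℚ_[p])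
  have hc : (z * p ^ v : ℚ) ≠ 0 := by
    have := (Fact.out : p.Prime).ne_zero
    positivity
  have hcoord : ∀ x ∈ latticeInter hN hp Λ L, ∀ i, z * p ^ v * e.repr x i ∈ zInv N := by
    rintro x ⟨hxΛ, hxL⟩ i
    refine (mem_zInv_iff_mem_zInv_mul_and_norm_le_one hN hp).mpr ⟨?_, ?_⟩
    · rw [mul_right_comm]
      exact mul_mem (hz x hxΛ i) (pow_mem (natCast_mem _ p) v)
    · have hx := hv _ hxL i
      rw [TensorProduct.mk_apply, Module.Basis.baseChange_repr_tmul, Rat.smul_one_eq_cast] at hx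
      push_cast
      rw [mul_assoc, norm_mul]
      exact mul_le_one₀ (Padic.norm_int_le_one z) (norm_nonneg _) hx
  refine FG.of_le (fg_span (Set.finite_range (e.unitsSMul fun _ => (Units.mk0 _ hc)⁻¹)))
    fun x hx => (Module.Basis.mem_span_iff_repr_mem _ _ _).mpr fun i => ?_
  rw [Module.Basis.repr_unitsSMul, inv_inv]
  exact ⟨⟨_, hcoord x hx i⟩, rfl⟩

theorem span_latticeInter (hΛ : span ℚ (Λ : Set V) = ⊤)
    (hL : span ℚ_[p] (L : Set (ℚ_[p] ⊗[ℚ] V)) = ⊤) :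
    span ℚ (latticeInter hN hp Λ L : Set V) = ⊤ := by
  refine eq_top_iff.mpr fun v _ => ?_
  obtain ⟨n, hn, hnv⟩ := (Λ.restrictScalars ℤ).exists_smul_mem_of_span_eq_top hΛ v
  obtain ⟨s, hs, hsv⟩ :=
    L.exists_smul_mem_of_span_eq_top hL (TensorProduct.mk ℚ ℚ_[p] V 1 v)
  have hpv := pow_valuation_smul_mem (nonZeroDivisors.ne_zero hs) hsv
  have hq : (n * (p : ℤ) ^ s.valuation) • v ∈ latticeInter hN hp Λ L := by
    refine ⟨?_, ?_⟩
    · rw [mul_comm n, mul_smul]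
      exact (Λ.restrictScalars ℤ).smul_mem _ hnv
    · rw [Set.mem_preimage, map_zsmul, mul_smul, ← Int.cast_smul_eq_zsmul ℤ_[p] (_ ^ _)]
      push_cast
      exact (L.restrictScalars ℤ).smul_mem n hpv
  have hq0 : ((n * (p : ℤ) ^ s.valuation : ℤ) : ℚ) ≠ 0 := by
    have := (Fact.out : p.Prime).ne_zero
    have := nonZeroDivisors.ne_zero hn
    positivity
  rw [← (span ℚ _).smul_mem_iff hq0, Int.cast_smul_eq_zsmul]
  exact subset_span hq

end Intersection

theorem lattice_intersect
    (V : Type*) [AddCommGroup V] [Module ℚ V] [FiniteDimensional ℚ V]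
    (N : ℕ) (hN : 1 ≤ N) (p : ℕ) [Fact p.Prime] (hp : ¬ (p ∣ N))
    -- Λ is a ℤ[1/(pN)]-lattice in V
    (Λ : Submodule (zInv (p * N)) V) (hΛfg : Λ.FG)
    (hΛspan : Submodule.span ℚ (Λ : Set V) = ⊤)
    -- L is a ℤ_p-lattice in V ⊗ ℚ_p
    (L : Submodule ℤ_[p] (ℚ_[p] ⊗[ℚ] V)) (hLfg : L.FG)
    (hLspan : Submodule.span ℚ_[p] (L : Set (ℚ_[p] ⊗[ℚ] V)) = ⊤) :
    -- then L ∩ Λ is a ℤ[1/N]-lattice in V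
    ∃ M : Submodule (zInv N) V,
      (M : Set V) =
        (Λ : Set V) ∩ ((TensorProduct.mk ℚ ℚ_[p] V 1) ⁻¹' (L : Set (ℚ_[p] ⊗[ℚ] V))) ∧
      M.FG ∧ Module.Free (zInv N) M ∧ Submodule.span ℚ (M : Set V) = ⊤ := by
  have hN0 : N ≠ 0 := Nat.one_le_iff_ne_zero.mp hN
  have := zInv.isPrincipalIdealRing hN0
  have : (latticeInter hN0 hp Λ L).IsLattice ℚ :=
    ⟨latticeInter_fg hΛfg hLfg, span_latticeInter hΛspan hLspan⟩
  exact ⟨latticeInter hN0 hp Λ L, rfl, Submodule.IsLattice.fg, inferInstance,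
    Submodule.IsLattice.span_eq_top⟩
end
end

section
/- Let R be an integrally closed domain with fraction field K, and let G be a finite group scheme over R. Then a G-torsor T over Spec R is trivial if and only if its generic fibre T_K is a trivial G_K-torsor. Equivalently, T(R) is nonempty if and only if T(K) is nonempty. -/
/-!
An `R`-point of `T = Spec B` is an `R`-algebra map `B → R`. Since `B` is finite over `R`, the
image of any `R`-algebra map `B → K` consists of elements integral over `R`, hence lies in `R`
because `R` is integrally closed; so `T(R) = T(K)`. This is the affine shadow of the valuative
criterion of properness.
-/

open scoped TensorProduct

namespace IsIntegrallyClosed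

variable {R K B : Type*} [CommRing R] [IsIntegrallyClosed R] [CommRing K] [Algebra R K]
  [IsFractionRing R K] [CommRing B] [Algebra R B] [Algebra.IsIntegral R B]

noncomputable def liftAlgHom (φ : B →ₐ[R] K) : B →ₐ[R] R :=
  letI := φ.toRingHom.toAlgebra
  haveI : IsScalarTower R B K := .of_algebraMap_eq fun r => (φ.commutes r).symm
  IsIntegralClosure.lift R R K

@[simp]
theorem algebraMap_liftAlgHom (φ : B →ₐ[R] K) (b : B) :
    algebraMap R K (liftAlgHom φ b) = φ b :=
  letI := φ.toRingHom.toAlgebra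
  haveI : IsScalarTower R B K := .of_algebraMap_eq fun r => (φ.commutes r).symm
  IsIntegralClosure.algebraMap_lift R R K b

variable (R K B) in
noncomputable def algHomEquiv : (B →ₐ[R] R) ≃ (B →ₐ[R] K) where
  toFun φ := (Algebra.ofId R K).comp φ
  invFun := liftAlgHom
  left_inv φ := AlgHom.ext fun b => IsFractionRing.injective R K
    (algebraMap_liftAlgHom ((Algebra.ofId R K).comp φ) b)
  right_inv φ := AlgHom.ext (algebraMap_liftAlgHom φ)

end IsIntegrallyClosed

theorem finite_torsor_trivial_iff_generically_trivial_general
    (R : Type) [CommRing R] [IsIntegrallyClosed R]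
    (B : Type) [CommRing B] [Algebra R B] [Module.Finite R B] :
    -- T(R) is nonempty iff T(K) is nonempty
    (Nonempty (B →ₐ[R] R) ↔ Nonempty (B →ₐ[R] FractionRing R)) :=
  (IsIntegrallyClosed.algHomEquiv R (FractionRing R) B).nonempty_congr

theorem finite_torsor_trivial_iff_generically_trivial
    (R : Type) [CommRing R] [IsDomain R] [IsIntegrallyClosed R]
    -- the finite flat group scheme G = Spec A
    (A : Type) [CommRing A] [HopfAlgebra R A] [Module.Finite R A] [Module.Flat R A]
    -- the torsor T = Spec B : a comodule algebra, finite and faithfully flat over R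
    (B : Type) [CommRing B] [Algebra R B] [Module.Finite R B] [Module.FaithfullyFlat R B]
    (ρ : B →ₐ[R] B ⊗[R] A)
    -- counit axiom for the coaction
    (hcounit :
      ((Algebra.TensorProduct.rid R R B).toAlgHom.comp
        ((Algebra.TensorProduct.map (AlgHom.id R B)
          (Bialgebra.counitAlgHom R A)).comp ρ)) = AlgHom.id R B)
    -- coassociativity axiom for the coaction
    (hcoassoc :
      (Algebra.TensorProduct.map (AlgHom.id R B) (Bialgebra.comulAlgHom R A)).comp ρ =
        ((Algebra.TensorProduct.assoc R R R B A A).toAlgHom.comp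
          ((Algebra.TensorProduct.map ρ (AlgHom.id R A)).comp ρ)))
    -- torsor (Hopf–Galois) axiom: the Galois map B ⊗ B → B ⊗ A is bijective
    (hGalois : Function.Bijective
      (Algebra.TensorProduct.lift (Algebra.TensorProduct.includeLeft : B →ₐ[R] B ⊗[R] A)
        ρ (fun x y => Commute.all _ _))) :
    -- T(R) is nonempty iff T(K) is nonempty
    (Nonempty (B →ₐ[R] R) ↔ Nonempty (B →ₐ[R] FractionRing R)) :=
  finite_torsor_trivial_iff_generically_trivial_general R B
end

section
/- Let S be a scheme, G ↠ Δ a surjection of S-group schemes, H → Δ another S-group homomorphism, and 𝓑 = G ×_Δ H the fibre product group scheme. Let X be an S-scheme, P_G a G-torsor and P_H an H-torsor on X, with an isomorphism of Δ-torsors θ: P_H ×^H Δ ≅ P_G ×^G Δ. Then P_𝓑 := P_G ×_θ P_H (the fibre product over the common pushout to Δ via θ) is a 𝓑-torsor, and it is the unique 𝓑-torsor (up to canonical isomorphism) equipped with isomorphisms θ_G: P_𝓑 ×^𝓑 G ≅ P_G and θ_H: P_𝓑 ×^𝓑 H ≅ P_H such that θ_H ∘ θ_G⁻¹ equals θ.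 -/
/-!
STATEMENT 11: Let G ↠ Δ be a surjection of group sheaves (on the étale/fppf site of an
S-scheme X, here abstracted to an arbitrary site), H → Δ another homomorphism, and
𝓑 = G ×_Δ H. Given a G-torsor P_G and an H-torsor P_H together with an isomorphism θ of
Δ-torsors between their pushouts to Δ (the pushouts being presented by equivariant maps
from P_G and P_H to Δ-torsors Q_G, Q_H), the fibre product P_𝓑 = P_G ×_θ P_H is a
𝓑-torsor, and it is the unique 𝓑-torsor with equivariant projections to P_G and P_H
compatible with θ.
-/

open CategoryTheory

universe w v u

noncomputable section

variable {C : Type u} [Category.{v} C]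

/-- A torsor on the site `(C, J)` under a presheaf of groups `G`: a sheaf of sets with a
natural `G`-action that is simply transitive on sections and locally has sections. -/
structure SiteTorsor (J : GrothendieckTopology C) (G : Cᵒᵖ ⥤ GrpCat.{w}) where
  P : Cᵒᵖ ⥤ Type w
  isSheaf : Presieve.IsSheaf J P
  act : ∀ U : Cᵒᵖ, G.obj U → P.obj U → P.obj U
  act_one : ∀ (U : Cᵒᵖ) (p : P.obj U), act U 1 p = p
  act_mul : ∀ (U : Cᵒᵖ) (g g' : G.obj U) (p : P.obj U),
    act U (g * g') p = act U g (act U g' p)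
  act_natural : ∀ {U V : Cᵒᵖ} (f : U ⟶ V) (g : G.obj U) (p : P.obj U),
    P.map f (act U g p) = act V (G.map f g) (P.map f p)
  simply_transitive : ∀ (U : Cᵒᵖ) (p q : P.obj U), ∃! g : G.obj U, act U g p = q
  locally_nonempty : ∀ U : C, ∃ S : Sieve U, S ∈ J U ∧
    ∀ {V : C} (f : V ⟶ U), S.arrows f → Nonempty (P.obj (Opposite.op V))

/-- An equivariant map of torsors along a homomorphism `φ : G ⟶ Δ` of group presheaves. -/
structure TorsorMap {J : GrothendieckTopology C} {G Δ : Cᵒᵖ ⥤ GrpCat.{w}} (φ : G ⟶ Δ)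
    (P : SiteTorsor J G) (Q : SiteTorsor J Δ) where
  t : P.P ⟶ Q.P
  equivariant : ∀ (U : Cᵒᵖ) (g : G.obj U) (p : P.P.obj U),
    t.app U (P.act U g p) = Q.act U (φ.app U g) (t.app U p)

/-!
The fibre product of two sheaves over a separated presheaf is again a sheaf, and `B` acts on
`P_G ×_θ P_H` componentwise through `πG` and `πH`; this preserves the fibre product because
`πG ≫ φG = πH ≫ φH`. If `g` and `h` move `(p_G, p_H)` to `(p_G', p_H')`, then `φG g` and
`φH h` both move the common image of `p_G` and `p_H` in the `Δ`-torsor to that of `p_G'` and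
`p_H'`, so they coincide since `Δ` acts freely, and `(g, h)` comes from a unique element of
`B = G ×_Δ H`. Locally `P_G` and `P_H` have sections, whose images differ by some `δ ∈ Δ`;
lifting `δ` to `G` (surjectivity of `φG`) corrects them into a section of the fibre product.

For uniqueness, a map of torsors under the same group is injective (the action is free) and
locally surjective (torsors have local sections), hence an isomorphism of sheaves. So the
comparison maps of `PB` and `PB'` to `P_G ×_θ P_H` are isomorphisms, and `ι` is forced.
-/

section

open Opposite

variable {J : GrothendieckTopology C}

namespace CategoryTheory.Presheaf

theorem isIso_of_injective_of_isLocallySurjective {F G : Cᵒᵖ ⥤ Type w}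
    (hF : Presieve.IsSheaf J F) (hG : Presieve.IsSheaf J G) (f : F ⟶ G)
    (hf : ∀ U, Function.Injective (f.app U)) [IsLocallySurjective J f] : IsIso f := by
  let f' : (⟨F, (isSheaf_iff_isSheaf_of_type J F).2 hF⟩ : Sheaf J (Type w)) ⟶
      ⟨G, (isSheaf_iff_isSheaf_of_type J G).2 hG⟩ := Sheaf.homEquiv.symm f
  have : IsLocallyInjective J f := isLocallyInjective_of_injective J f hf
  have : IsIso f' := (Sheaf.isLocallyBijective_iff_isIso f').1 ⟨this, ‹_›⟩
  exact (inferInstance : IsIso ((sheafToPresheaf J _).map f'))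

section FibreProduct

variable {F₁ F₂ K : Cᵒᵖ ⥤ Type w} (a : F₁ ⟶ K) (b : F₂ ⟶ K)

def fibreProduct : Cᵒᵖ ⥤ Type w where
  obj U := {x : F₁.obj U × F₂.obj U // a.app U x.1 = b.app U x.2}
  map f := TypeCat.ofHom fun x => ⟨(F₁.map f x.1.1, F₂.map f x.1.2), by
    rw [NatTrans.naturality_apply, NatTrans.naturality_apply, x.2]⟩
  map_id U := by ext <;> simp
  map_comp f g := by ext <;> simp

namespace fibreProduct

def fst : fibreProduct a b ⟶ F₁ where
  app U := TypeCat.ofHom fun x => x.1.1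

def snd : fibreProduct a b ⟶ F₂ where
  app U := TypeCat.ofHom fun x => x.1.2

def lift {P : Cᵒᵖ ⥤ Type w} (f₁ : P ⟶ F₁) (f₂ : P ⟶ F₂)
    (h : ∀ U x, a.app U (f₁.app U x) = b.app U (f₂.app U x)) : P ⟶ fibreProduct a b where
  app U := TypeCat.ofHom fun x => ⟨(f₁.app U x, f₂.app U x), h U x⟩
  naturality U V f := by
    ext x
    all_goals simp [fibreProduct, NatTrans.naturality_apply]

variable {a b}

theorem ext {U : Cᵒᵖ} {x y : (fibreProduct a b).obj U} (h₁ : x.1.1 = y.1.1)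
    (h₂ : x.1.2 = y.1.2) : x = y :=
  Subtype.ext (Prod.ext h₁ h₂)

theorem ext_iff {U : Cᵒᵖ} {x y : (fibreProduct a b).obj U} :
    x = y ↔ x.1.1 = y.1.1 ∧ x.1.2 = y.1.2 :=
  ⟨fun h => h ▸ ⟨rfl, rfl⟩, fun h => ext h.1 h.2⟩

end fibreProduct

theorem isSheaf_fibreProduct (h₁ : Presieve.IsSheaf J F₁) (h₂ : Presieve.IsSheaf J F₂)
    (hK : Presieve.IsSeparated J K) : Presieve.IsSheaf J (fibreProduct a b) := by
  intro X S hS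
  have h₁S := h₁ S hS
  have h₂S := h₂ S hS
  refine Presieve.IsSeparatedFor.isSheafFor (fun x t t' ht ht' => ?_) (fun x hx => ?_)
  · exact fibreProduct.ext
      (h₁S.isSeparatedFor.ext fun _ f hf =>
        (ht.map (fibreProduct.fst a b) f hf).trans (ht'.map (fibreProduct.fst a b) f hf).symm)
      (h₂S.isSeparatedFor.ext fun _ f hf =>
        (ht.map (fibreProduct.snd a b) f hf).trans (ht'.map (fibreProduct.snd a b) f hf).symm)
  · have hx₁ := hx.map (fibreProduct.fst a b)
    have hx₂ := hx.map (fibreProduct.snd a b)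
    have ht : a.app _ (h₁S.amalgamate _ hx₁) = b.app _ (h₂S.amalgamate _ hx₂) := by
      refine (hK S hS).ext fun _ f hf => ?_
      rw [← NatTrans.naturality_apply, ← NatTrans.naturality_apply, h₁S.valid_glue hx₁ f hf,
        h₂S.valid_glue hx₂ f hf]
      exact (x f hf).2
    exact ⟨⟨(_, _), ht⟩, fun _ f hf =>
      fibreProduct.ext (h₁S.valid_glue hx₁ f hf) (h₂S.valid_glue hx₂ f hf)⟩

end FibreProduct

end CategoryTheory.Presheaf

theorem SiteTorsor.act_left_injective {A : Cᵒᵖ ⥤ GrpCat.{w}} (P : SiteTorsor J A)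
    (U : Cᵒᵖ) (p : P.P.obj U) : Function.Injective fun g : A.obj U => P.act U g p :=
  fun g _ h => (P.simply_transitive U p (P.act U g p)).unique rfl h.symm

namespace TorsorMap

variable {A A' : Cᵒᵖ ⥤ GrpCat.{w}} {φ : A ⟶ A'}
  {P : SiteTorsor J A} {Q : SiteTorsor J A'} {R : SiteTorsor J A'}

@[ext]
theorem ext {f g : TorsorMap φ P Q} (h : f.t = g.t) : f = g := by
  cases f; cases g; cases h; rfl

theorem congr_app {f g : TorsorMap φ P Q} (h : f = g) (U : Cᵒᵖ) (x : P.P.obj U) :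
    f.t.app U x = g.t.app U x :=
  h ▸ rfl

def comp (f : TorsorMap φ P Q) (g : TorsorMap (𝟙 A') Q R) : TorsorMap φ P R where
  t := f.t ≫ g.t
  equivariant U a p := by
    simp only [NatTrans.comp_app_apply, f.equivariant, g.equivariant]
    rfl

theorem injective_app (f : TorsorMap φ P Q) {U : Cᵒᵖ} (hφ : Function.Injective (φ.app U)) :
    Function.Injective (f.t.app U) := by
  intro x y hxy
  obtain ⟨a, rfl⟩ := (P.simply_transitive U x y).exists
  have h : Q.act U (φ.app U a) (f.t.app U x) = Q.act U (φ.app U 1) (f.t.app U x) := by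
    rw [← f.equivariant, ← hxy, map_one, Q.act_one]
  rw [hφ (Q.act_left_injective U _ h), P.act_one]

theorem isLocallySurjective (f : TorsorMap φ P Q) (hφ : ∀ U, Function.Surjective (φ.app U)) :
    Presheaf.IsLocallySurjective J f.t where
  imageSieve_mem {U} q := by
    obtain ⟨S, hS, hP⟩ := P.locally_nonempty U
    refine J.superset_covering (fun V g hg => ?_) hS
    obtain ⟨p⟩ := hP g hg
    obtain ⟨a', ha'⟩ := (Q.simply_transitive _ (f.t.app _ p) (Q.P.map g.op q)).exists
    obtain ⟨a, rfl⟩ := hφ _ a'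
    exact ⟨P.act _ a p, (f.equivariant _ a p).trans ha'⟩

variable {P' Q' R' : SiteTorsor J A}

instance isIso_t (f : TorsorMap (𝟙 A) P' Q') : IsIso f.t :=
  have := f.isLocallySurjective fun _ a => ⟨a, rfl⟩
  Presheaf.isIso_of_injective_of_isLocallySurjective P'.isSheaf Q'.isSheaf f.t
    fun _ => f.injective_app fun _ _ h => h

def symm (f : TorsorMap (𝟙 A) P' Q') : TorsorMap (𝟙 A) Q' P' where
  t := inv f.t
  equivariant U a q := f.injective_app (U := U) (fun _ _ h => h) <| by
    simp [f.equivariant]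

theorem existsUnique_comp_eq (g : TorsorMap (𝟙 A) Q' R') (k : TorsorMap (𝟙 A) P' R') :
    ∃! f : TorsorMap (𝟙 A) P' Q', f.comp g = k :=
  ⟨k.comp g.symm, by ext1; simp [comp, symm], fun f hf => by ext1; simp [← hf, comp, symm]⟩

end TorsorMap

namespace SiteTorsor

section FibreProduct

open Presheaf

variable {G H Δ B : Cᵒᵖ ⥤ GrpCat.{w}} {φG : G ⟶ Δ} {φH : H ⟶ Δ}
  {πG : B ⟶ G} {πH : B ⟶ H} {PG : SiteTorsor J G} {PH : SiteTorsor J H} {Q : SiteTorsor J Δ}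
  (eG : TorsorMap φG PG Q) (eH : TorsorMap φH PH Q)

def fibreProductAct (hcomm : πG ≫ φG = πH ≫ φH) (U : Cᵒᵖ) (b : B.obj U)
    (x : (fibreProduct eG.t eH.t).obj U) : (fibreProduct eG.t eH.t).obj U :=
  ⟨(PG.act U (πG.app U b) x.1.1, PH.act U (πH.app U b) x.1.2), by
    rw [eG.equivariant, eH.equivariant, x.2, ← NatTrans.comp_app_apply, hcomm,
      NatTrans.comp_app_apply]⟩

theorem fibreProductAct_simply_transitive (hcomm : πG ≫ φG = πH ≫ φH)
    (hpullback : ∀ (U : Cᵒᵖ) (g : G.obj U) (h : H.obj U), φG.app U g = φH.app U h →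
      ∃! b : B.obj U, πG.app U b = g ∧ πH.app U b = h)
    (U : Cᵒᵖ) (x y : (fibreProduct eG.t eH.t).obj U) :
    ∃! b : B.obj U, fibreProductAct eG eH hcomm U b x = y := by
  obtain ⟨g, hg⟩ := (PG.simply_transitive U x.1.1 y.1.1).exists
  obtain ⟨h, hh⟩ := (PH.simply_transitive U x.1.2 y.1.2).exists
  have hgh : φG.app U g = φH.app U h := by
    refine Q.act_left_injective U (eG.t.app U x.1.1) ?_
    dsimp only
    rw [← eG.equivariant, hg, y.2, ← hh, eH.equivariant, ← x.2]
  have hact : ∀ b, fibreProductAct eG eH hcomm U b x = y ↔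
      πG.app U b = g ∧ πH.app U b = h := by
    intro b
    rw [fibreProduct.ext_iff, ← hg, ← hh]
    exact and_congr (PG.act_left_injective U _).eq_iff (PH.act_left_injective U _).eq_iff
  exact (existsUnique_congr hact).2 (hpullback U g h hgh)

theorem fibreProduct_locally_nonempty (hsurj : ∀ U : Cᵒᵖ, Function.Surjective (φG.app U))
    (U : C) : ∃ S : Sieve U, S ∈ J U ∧
      ∀ {V : C} (f : V ⟶ U), S.arrows f → Nonempty ((fibreProduct eG.t eH.t).obj (op V)) := by
  obtain ⟨SG, hSG, hPG⟩ := PG.locally_nonempty U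
  obtain ⟨SH, hSH, hPH⟩ := PH.locally_nonempty U
  refine ⟨SG ⊓ SH, J.intersection_covering hSG hSH, fun f hf => ?_⟩
  obtain ⟨pG⟩ := hPG f hf.1
  obtain ⟨pH⟩ := hPH f hf.2
  obtain ⟨δ, hδ⟩ := (Q.simply_transitive _ (eG.t.app _ pG) (eH.t.app _ pH)).exists
  obtain ⟨g, rfl⟩ := hsurj _ δ
  exact ⟨⟨(PG.act _ g pG, pH), (eG.equivariant _ g pG).trans hδ⟩⟩

variable (hsurj : ∀ U : Cᵒᵖ, Function.Surjective (φG.app U))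
  (hcomm : πG ≫ φG = πH ≫ φH)
  (hpullback : ∀ (U : Cᵒᵖ) (g : G.obj U) (h : H.obj U), φG.app U g = φH.app U h →
      ∃! b : B.obj U, πG.app U b = g ∧ πH.app U b = h)

def fibreProduct : SiteTorsor J B where
  P := Presheaf.fibreProduct eG.t eH.t
  isSheaf := isSheaf_fibreProduct _ _ PG.isSheaf PH.isSheaf Q.isSheaf.isSeparated
  act := fibreProductAct eG eH hcomm
  act_one U x := Presheaf.fibreProduct.ext
    (by simp [fibreProductAct, PG.act_one]) (by simp [fibreProductAct, PH.act_one])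
  act_mul U b b' x := Presheaf.fibreProduct.ext
    (by simp [fibreProductAct, PG.act_mul]) (by simp [fibreProductAct, PH.act_mul])
  act_natural f b x := Presheaf.fibreProduct.ext
    ((PG.act_natural f _ _).trans
      (congrArg (PG.act _ · _) (NatTrans.naturality_apply πG f b).symm))
    ((PH.act_natural f _ _).trans
      (congrArg (PH.act _ · _) (NatTrans.naturality_apply πH f b).symm))
  simply_transitive := fibreProductAct_simply_transitive eG eH hcomm hpullback
  locally_nonempty := fibreProduct_locally_nonempty eG eH hsurj

end FibreProduct

namespace fibreProduct

variable {G H Δ B : Cᵒᵖ ⥤ GrpCat.{w}} {φG : G ⟶ Δ} {φH : H ⟶ Δ}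
  {πG : B ⟶ G} {πH : B ⟶ H} {PG : SiteTorsor J G} {PH : SiteTorsor J H} {Q : SiteTorsor J Δ}
  {eG : TorsorMap φG PG Q} {eH : TorsorMap φH PH Q}
  {hsurj : ∀ U : Cᵒᵖ, Function.Surjective (φG.app U)} {hcomm : πG ≫ φG = πH ≫ φH}
  {hpullback : ∀ (U : Cᵒᵖ) (g : G.obj U) (h : H.obj U), φG.app U g = φH.app U h →
      ∃! b : B.obj U, πG.app U b = g ∧ πH.app U b = h}

def fst : TorsorMap πG (fibreProduct eG eH hsurj hcomm hpullback) PG where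
  t := Presheaf.fibreProduct.fst eG.t eH.t
  equivariant _ _ _ := rfl

def snd : TorsorMap πH (fibreProduct eG eH hsurj hcomm hpullback) PH where
  t := Presheaf.fibreProduct.snd eG.t eH.t
  equivariant _ _ _ := rfl

def lift {P : SiteTorsor J B} (ρG : TorsorMap πG P PG) (ρH : TorsorMap πH P PH)
    (h : ∀ U x, eG.t.app U (ρG.t.app U x) = eH.t.app U (ρH.t.app U x)) :
    TorsorMap (𝟙 B) P (fibreProduct eG eH hsurj hcomm hpullback) where
  t := Presheaf.fibreProduct.lift eG.t eH.t ρG.t ρH.t h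
  equivariant U b x := Presheaf.fibreProduct.ext (ρG.equivariant U b x) (ρH.equivariant U b x)

theorem comp_lift_eq_lift_iff {P P' : SiteTorsor J B}
    {ρG : TorsorMap πG P PG} {ρH : TorsorMap πH P PH}
    {ρG' : TorsorMap πG P' PG} {ρH' : TorsorMap πH P' PH}
    (h : ∀ U x, eG.t.app U (ρG.t.app U x) = eH.t.app U (ρH.t.app U x))
    (h' : ∀ U x, eG.t.app U (ρG'.t.app U x) = eH.t.app U (ρH'.t.app U x))
    (ι : TorsorMap (𝟙 B) P' P) :
    ι.comp (lift (hsurj := hsurj) (hcomm := hcomm) (hpullback := hpullback) ρG ρH h) =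
        lift ρG' ρH' h' ↔
      (∀ U x, ρG.t.app U (ι.t.app U x) = ρG'.t.app U x) ∧
        ∀ U x, ρH.t.app U (ι.t.app U x) = ρH'.t.app U x := by
  refine ⟨fun hι => ⟨fun U x => ?_, fun U x => ?_⟩, fun ⟨hG, hH⟩ => ?_⟩
  · exact congrArg (·.1.1) (TorsorMap.congr_app hι U x)
  · exact congrArg (·.1.2) (TorsorMap.congr_app hι U x)
  · ext U x
    exact Presheaf.fibreProduct.ext (hG U x) (hH U x)

end fibreProduct

end SiteTorsor

end

theorem torsor_fibre_product
    (J : GrothendieckTopology C) (G H Δ B : Cᵒᵖ ⥤ GrpCat.{w})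
    (φG : G ⟶ Δ) (φH : H ⟶ Δ)
    -- G ↠ Δ is (locally, hence on a site with enough points, sectionwise w.l.o.g.) surjective
    (hsurj : ∀ U : Cᵒᵖ, Function.Surjective (φG.app U))
    -- B = G ×_Δ H
    (πG : B ⟶ G) (πH : B ⟶ H)
    (hcomm : πG ≫ φG = πH ≫ φH)
    (hpullback : ∀ (U : Cᵒᵖ) (g : G.obj U) (h : H.obj U), φG.app U g = φH.app U h →
      ∃! b : B.obj U, πG.app U b = g ∧ πH.app U b = h)
    -- the torsors P_G and P_H, and their pushouts Q_G = P_G ×^G Δ, Q_H = P_H ×^H Δ,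
    -- presented by equivariant maps
    (PG : SiteTorsor J G) (PH : SiteTorsor J H) (QG QH : SiteTorsor J Δ)
    (eG : TorsorMap φG PG QG) (eH : TorsorMap φH PH QH)
    -- θ : P_H ×^H Δ ≅ P_G ×^G Δ, an isomorphism of Δ-torsors
    (θ : TorsorMap (𝟙 Δ) QH QG) :
    -- existence: the fibre product P_G ×_θ P_H is a B-torsor with equivariant
    -- projections to P_G and P_H compatible with θ
    (∃ (PB : SiteTorsor J B) (ρG : TorsorMap πG PB PG) (ρH : TorsorMap πH PB PH),
      (∀ (U : Cᵒᵖ) (x : PB.P.obj U),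
        eG.t.app U (ρG.t.app U x) = θ.t.app U (eH.t.app U (ρH.t.app U x))) ∧
      ∀ (U : Cᵒᵖ) (pG : PG.P.obj U) (pH : PH.P.obj U),
        eG.t.app U pG = θ.t.app U (eH.t.app U pH) →
        ∃! x : PB.P.obj U, ρG.t.app U x = pG ∧ ρH.t.app U x = pH) ∧
    -- uniqueness: any B-torsor with compatible equivariant projections is canonically
    -- isomorphic to it
    (∀ (PB PB' : SiteTorsor J B)
      (ρG : TorsorMap πG PB PG) (ρH : TorsorMap πH PB PH)
      (ρG' : TorsorMap πG PB' PG) (ρH' : TorsorMap πH PB' PH),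
      (∀ (U : Cᵒᵖ) (x : PB.P.obj U),
        eG.t.app U (ρG.t.app U x) = θ.t.app U (eH.t.app U (ρH.t.app U x))) →
      (∀ (U : Cᵒᵖ) (x : PB'.P.obj U),
        eG.t.app U (ρG'.t.app U x) = θ.t.app U (eH.t.app U (ρH'.t.app U x))) →
      ∃! ι : TorsorMap (𝟙 B) PB' PB,
        (∀ (U : Cᵒᵖ) (x : PB'.P.obj U), ρG.t.app U (ι.t.app U x) = ρG'.t.app U x) ∧
        (∀ (U : Cᵒᵖ) (x : PB'.P.obj U), ρH.t.app U (ι.t.app U x) = ρH'.t.app U x)) := by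
  refine ⟨⟨SiteTorsor.fibreProduct eG (eH.comp θ) hsurj hcomm hpullback,
    SiteTorsor.fibreProduct.fst, SiteTorsor.fibreProduct.snd, fun U x => x.2, ?_⟩, ?_⟩
  · intro U pG pH h
    exact ⟨⟨(pG, pH), h⟩, ⟨rfl, rfl⟩, fun x hx => Presheaf.fibreProduct.ext hx.1 hx.2⟩
  · intro PB PB' ρG ρH ρG' ρH' h h'
    exact (existsUnique_congr (SiteTorsor.fibreProduct.comp_lift_eq_lift_iff (eH := eH.comp θ)
      (hsurj := hsurj) (hcomm := hcomm) (hpullback := hpullback) h h')).1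
      (TorsorMap.existsUnique_comp_eq _ _)

end
end
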